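/- Let F_red and F_blue be clausal ground formulas such that F_red is Horn (each clause of F_red contains at most one positive literal), and let T be a closed two-sided clausal ground tableau for F_red and F_blue that is a positive hyper tableau. Then for every node N of T, the formula ipol(N) is equivalent to a ground Horn clausal formula; in particular, ipol(N) of the root is equivalent to a ground Horn clausal formula, obtainable from ipol(N) by distributing disjunction over conjunction. -/

import Mathlib

namespace CTI

/-- Terms of first-order logic: variables and function applications.
Function symbols with empty argument lists play the role of constants. -/
inductive Tm : Type where
  | var : ℕ → Tm
  | fn  : ℕ → List Tm → Tm

/-- The variables occurring in a term. -/
def Tm.vars : Tm → List ℕ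
  | .var x => [x]
  | .fn _ ts => (ts.attach.map (fun t => Tm.vars t.1)).flatten
decreasing_by
  have h := List.sizeOf_lt_of_mem t.2; simp_wf; omega

/-- The function symbols occurring in a term. -/
def Tm.funs : Tm → List ℕ
  | .var _ => []
  | .fn f ts => f :: (ts.attach.map (fun t => Tm.funs t.1)).flatten
decreasing_by
  have h := List.sizeOf_lt_of_mem t.2; simp_wf; omega

/-- A term is ground iff it contains no variables. -/
def Tm.ground (t : Tm) : Prop := t.vars = []

/-- An interpretation (structure) over domain `D`. -/
structure Interp (D : Type) where
  fn : ℕ → List D → D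
  pr : ℕ → List D → Prop

/-- Evaluation of a term under an interpretation and a variable assignment. -/
def Tm.eval {D : Type} (I : Interp D) (a : ℕ → D) : Tm → D
  | .var x => a x
  | .fn f ts => I.fn f (ts.attach.map (fun t => Tm.eval I a t.1))
decreasing_by
  have h := List.sizeOf_lt_of_mem t.2; simp_wf; omega

/-- Formulas of first-order logic without equality. -/
inductive Fml : Type where
  | tru : Fml
  | fls : Fml
  | atom : ℕ → List Tm → Fml
  | neg : Fml → Fml
  | and : Fml → Fml → Fml
  | or : Fml → Fml → Fml
  | all : ℕ → Fml → Fml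
  | ex : ℕ → Fml → Fml

/-- Satisfaction of a formula under an interpretation and an assignment. -/
def Fml.holds {D : Type} (I : Interp D) : (ℕ → D) → Fml → Prop
  | _, .tru => True
  | _, .fls => False
  | a, .atom p ts => I.pr p (ts.map (Tm.eval I a))
  | a, .neg F => ¬ Fml.holds I a F
  | a, .and F G => Fml.holds I a F ∧ Fml.holds I a G
  | a, .or F G => Fml.holds I a F ∨ Fml.holds I a G
  | a, .all x F => ∀ d : D, Fml.holds I (Function.update a x d) F
  | a, .ex x F => ∃ d : D, Fml.holds I (Function.update a x d) F

/-- Semantic entailment: every structure (with nonempty domain) and assignment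
satisfying `F` satisfies `G`. -/
def Entails (F G : Fml) : Prop :=
  ∀ (D : Type) (_ : Nonempty D) (I : Interp D) (a : ℕ → D), F.holds I a → G.holds I a

/-- Semantic equivalence. -/
def EquivF (F G : Fml) : Prop := Entails F G ∧ Entails G F

/-- The atoms occurring in a formula, together with a polarity, relative to
the polarity `pol` of the context (`true` = positive). -/
def Fml.litsP : Bool → Fml → Set (Bool × ℕ × List Tm)
  | _, .tru => ∅
  | _, .fls => ∅
  | pol, .atom p ts => {(pol, p, ts)}
  | pol, .neg F => Fml.litsP (!pol) F
  | pol, .and F G => Fml.litsP pol F ∪ Fml.litsP pol G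
  | pol, .or F G => Fml.litsP pol F ∪ Fml.litsP pol G
  | pol, .all _ F => Fml.litsP pol F
  | pol, .ex _ F => Fml.litsP pol F

/-- lit(F): the set of pairs of an atom together with a polarity such that
the atom occurs in `F` with that polarity. -/
def Fml.lits (F : Fml) : Set (Bool × ℕ × List Tm) := Fml.litsP true F

/-- pred(F): predicates together with polarities of their occurrences. -/
def Fml.preds (F : Fml) : Set (Bool × ℕ) := {bp | ∃ ts, (bp.1, bp.2, ts) ∈ F.lits}

/-- The predicate symbols occurring in a formula (irrespective of polarity). -/
def Fml.predSyms (F : Fml) : Set ℕ := {p | ∃ b ts, (b, p, ts) ∈ F.lits}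

/-- fun(F): the function symbols (including constants) occurring in `F`. -/
def Fml.funs : Fml → Set ℕ
  | .tru => ∅
  | .fls => ∅
  | .atom _ ts => {f | ∃ t ∈ ts, f ∈ Tm.funs t}
  | .neg F => F.funs
  | .and F G => F.funs ∪ G.funs
  | .or F G => F.funs ∪ G.funs
  | .all _ F => F.funs
  | .ex _ F => F.funs

/-- The free variables of a formula. -/
def Fml.fv : Fml → Set ℕ
  | .tru => ∅
  | .fls => ∅
  | .atom _ ts => {x | ∃ t ∈ ts, x ∈ Tm.vars t}
  | .neg F => F.fv
  | .and F G => F.fv ∪ G.fv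
  | .or F G => F.fv ∪ G.fv
  | .all x F => F.fv \ {x}
  | .ex x F => F.fv \ {x}

/-- The variables occurring bound in a formula. -/
def Fml.bv : Fml → Set ℕ
  | .tru => ∅
  | .fls => ∅
  | .atom _ _ => ∅
  | .neg F => F.bv
  | .and F G => F.bv ∪ G.bv
  | .or F G => F.bv ∪ G.bv
  | .all x F => insert x F.bv
  | .ex x F => insert x F.bv

/-- All variables occurring in a formula (free or bound). -/
def Fml.varsSet : Fml → Set ℕ
  | .tru => ∅
  | .fls => ∅
  | .atom _ ts => {x | ∃ t ∈ ts, x ∈ Tm.vars t}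
  | .neg F => F.varsSet
  | .and F G => F.varsSet ∪ G.varsSet
  | .or F G => F.varsSet ∪ G.varsSet
  | .all x F => insert x F.varsSet
  | .ex x F => insert x F.varsSet

/-- Quantifier-free formulas. -/
def Fml.qfree : Fml → Prop
  | .tru => True
  | .fls => True
  | .atom _ _ => True
  | .neg F => F.qfree
  | .and F G => F.qfree ∧ G.qfree
  | .or F G => F.qfree ∧ G.qfree
  | .all _ _ => False
  | .ex _ _ => False

/-- Ground formulas: quantifier-free and without variables. -/
def Fml.isGround : Fml → Prop
  | .tru => True
  | .fls => True
  | .atom _ ts => ∀ t ∈ ts, Tm.vars t = []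
  | .neg F => F.isGround
  | .and F G => F.isGround ∧ G.isGround
  | .or F G => F.isGround ∧ G.isGround
  | .all _ _ => False
  | .ex _ _ => False

end CTI

namespace CTI

/-! ### Literals, clauses, clausal formulas -/

/-- A literal: a polarity (`true` = positive atom, `false` = negated atom),
a predicate symbol and an argument list. -/
abbrev Lit := Bool × ℕ × List Tm

/-- A clause: a finite disjunction of literals, as a list. -/
abbrev Clause := List Lit

/-- A clausal formula: a finite conjunction of clauses, as a list. -/
abbrev CForm := List Clause

/-- The complement of a literal. -/
def litCompl (l : Lit) : Lit := (!l.1, l.2.1, l.2.2)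

/-- The formula corresponding to a literal. -/
def litFml (l : Lit) : Fml := if l.1 then .atom l.2.1 l.2.2 else .neg (.atom l.2.1 l.2.2)

/-- The formula corresponding to a clause (disjunction of its literals). -/
def clauseFml (C : Clause) : Fml := C.foldr (fun l F => .or (litFml l) F) .fls

/-- The formula corresponding to a clausal formula (conjunction of its clauses). -/
def cformFml (cs : CForm) : Fml := cs.foldr (fun C F => .and (clauseFml C) F) .tru

def litGround (l : Lit) : Prop := ∀ t ∈ l.2.2, Tm.vars t = []
def clauseGround (C : Clause) : Prop := ∀ l ∈ C, litGround l
def cformGround (cs : CForm) : Prop := ∀ C ∈ cs, clauseGround C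

/-- The function symbols occurring in a clausal formula. -/
def cformFuns (cs : CForm) : Set ℕ := {f | ∃ C ∈ cs, ∃ l ∈ C, ∃ t ∈ l.2.2, f ∈ Tm.funs t}

/-- Application of a substitution to a term. -/
def Tm.applySub (σ : ℕ → Tm) : Tm → Tm
  | .var x => σ x
  | .fn f ts => .fn f (ts.attach.map (fun t => Tm.applySub σ t.1))
decreasing_by
  have h := List.sizeOf_lt_of_mem t.2; simp_wf; omega

/-- Application of a substitution to a literal. -/
def litSub (σ : ℕ → Tm) (l : Lit) : Lit := (l.1, l.2.1, l.2.2.map (Tm.applySub σ))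

/-- `C` is a substitution instance of the clause `D`. -/
def instClause (C D : Clause) : Prop := ∃ σ : ℕ → Tm, C = D.map (litSub σ)

/-- The subterm relation: `Subt s t` iff `s` occurs as a subterm of `t`. -/
inductive Subt : Tm → Tm → Prop
  | refl (t) : Subt t t
  | step {s u} (f : ℕ) (ts : List Tm) : u ∈ ts → Subt s u → Subt s (.fn f ts)

/-- Strict subterm relation. -/
def StrictSubt (s t : Tm) : Prop := Subt s t ∧ s ≠ t

/-- `Tm.builtFrom S C t`: `t` is a ground term built from function symbols in `S`,
where the symbols in `C` may additionally be used as constants. -/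
inductive Tm.builtFrom (S C : Set ℕ) : Tm → Prop
  | app {f : ℕ} {ts : List Tm} : f ∈ S → (∀ t ∈ ts, Tm.builtFrom S C t) →
      Tm.builtFrom S C (.fn f ts)
  | cst {c : ℕ} : c ∈ C → Tm.builtFrom S C (.fn c [])

/-! ### Clausal tableaux -/

/-- A node of a clausal tableau: a literal label, a side label
(`true` = red/left, `false` = blue/right; ignored for one-sided tableaux)
and the list of children in left-to-right order.  A whole tableau is the
list of children of the (unlabeled) root. -/
inductive Tab : Type where
  | node : Lit → Bool → List Tab → Tab

def Tab.lit : Tab → Lit | .node l _ _ => l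
def Tab.side : Tab → Bool | .node _ s _ => s
def Tab.children : Tab → List Tab | .node _ _ cs => cs

/-- The subtrees of a clausal tableau (given as list of children of the root)
together with the branch of (literal, side) pairs of their strict ancestors,
innermost first. -/
inductive OccIn (T : List Tab) : List (Lit × Bool) → Tab → Prop
  | top {t} : t ∈ T → OccIn T [] t
  | step {br l s cs c} : OccIn T br (.node l s cs) → c ∈ cs → OccIn T ((l, s) :: br) c

/-- Well-formedness of a (one-sided) clausal tableau below some node, for the
clausal formula `F`: the children of every node either are absent or their
literal labels form an instance of a clause in `F`. -/
inductive TabFor (F : CForm) : Tab → Prop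
  | mk {l s cs} : (cs = [] ∨ ∃ D ∈ F, instClause (cs.map Tab.lit) D) →
      (∀ c ∈ cs, TabFor F c) → TabFor F (.node l s cs)

/-- A clausal tableau for the clausal formula `F`. -/
def TableauFor (F : CForm) (T : List Tab) : Prop :=
  (T = [] ∨ ∃ D ∈ F, instClause (T.map Tab.lit) D) ∧ ∀ t ∈ T, TabFor F t

/-- Closedness of the subtree rooted at a node whose strict ancestors carry
the literals in `br`: every leaf has an ancestor labeled with its complement. -/
inductive ClosedFrom : List Lit → Tab → Prop
  | leaf {br : List Lit} {l s} : litCompl l ∈ br → ClosedFrom br (.node l s [])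
  | inner {br : List Lit} {l s cs} : cs ≠ [] → (∀ c ∈ cs, ClosedFrom (l :: br) c) →
      ClosedFrom br (.node l s cs)

/-- A closed clausal tableau: all leaves are closed (the root, being unlabeled,
must have children). -/
def ClosedTableau (T : List Tab) : Prop := T ≠ [] ∧ ∀ t ∈ T, ClosedFrom [] t

/-- All nodes of a subtree satisfy `P`. -/
inductive TabAll (P : Tab → Prop) : Tab → Prop
  | mk {l s cs} : P (.node l s cs) → (∀ c ∈ cs, TabAll P c) → TabAll P (.node l s cs)

/-! ### Two-sided clausal tableaux and interpolant extraction -/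

/-- Well-formedness of a two-sided clausal tableau below a node, for clausal
formulas `Fr` (side `true` = red) and `Fb` (side `false` = blue):
siblings have the same side, and the literal labels of the children of any
node form an instance of a clause of the formula of their side. -/
inductive TwoTabFor (Fr Fb : CForm) : Tab → Prop
  | mk {l s cs} :
      (cs = [] ∨ ∃ b : Bool, (∀ c ∈ cs, Tab.side c = b) ∧
        ∃ D ∈ (if b then Fr else Fb), instClause (cs.map Tab.lit) D) →
      (∀ c ∈ cs, TwoTabFor Fr Fb c) → TwoTabFor Fr Fb (.node l s cs)

/-- A two-sided clausal tableau for `Fr` and `Fb`. -/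
def TwoTableauFor (Fr Fb : CForm) (T : List Tab) : Prop :=
  (T = [] ∨ ∃ b : Bool, (∀ c ∈ T, Tab.side c = b) ∧
    ∃ D ∈ (if b then Fr else Fb), instClause (T.map Tab.lit) D)
  ∧ ∀ t ∈ T, TwoTabFor Fr Fb t

/-- Closedness, with the branch carrying side labels. -/
inductive SClosedFrom : List (Lit × Bool) → Tab → Prop
  | leaf {br : List (Lit × Bool)} {l s} : (∃ s', (litCompl l, s') ∈ br) →
      SClosedFrom br (.node l s [])
  | inner {br : List (Lit × Bool)} {l s cs} : cs ≠ [] →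
      (∀ c ∈ cs, SClosedFrom ((l, s) :: br) c) → SClosedFrom br (.node l s cs)

/-- The value of ipol at a closed leaf, determined by the side `s` of the leaf
and the side `ts` of its target, from the literal label `l`. -/
def leafIpol (s ts : Bool) (l : Lit) : Fml :=
  match s, ts with
  | true, true => .fls
  | true, false => litFml l
  | false, true => litFml (litCompl l)
  | false, false => .tru

/-- `Ipol br t H`: `H` is a value of ipol at the node `t` whose branch of strict
ancestors (with sides) is `br`, for some association of targets to closed leaves.
At a leaf, the target is an ancestor labeled with the complement of the leaf's
literal; at an inner node, ipol is the disjunction (side red) or conjunction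
(side blue) of the values at the children. -/
inductive Ipol : List (Lit × Bool) → Tab → Fml → Prop
  | leaf {br l s ts} : (litCompl l, ts) ∈ br →
      Ipol br (.node l s []) (leafIpol s ts l)
  | innerR {br l s cs Hs} : cs ≠ [] → (∀ c ∈ cs, Tab.side c = true) →
      cs.length = Hs.length →
      (∀ p ∈ List.zip cs Hs, Ipol ((l, s) :: br) p.1 p.2) →
      Ipol br (.node l s cs) (Hs.foldr .or .fls)
  | innerB {br l s cs Hs} : cs ≠ [] → (∀ c ∈ cs, Tab.side c = false) →
      cs.length = Hs.length →
      (∀ p ∈ List.zip cs Hs, Ipol ((l, s) :: br) p.1 p.2) →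
      Ipol br (.node l s cs) (Hs.foldr .and .tru)

/-- `IpolRoot T H`: `H` is a value of ipol at the root of the tableau `T`. -/
inductive IpolRoot : List Tab → Fml → Prop
  | rootR {T Hs} : T ≠ [] → (∀ t ∈ T, Tab.side t = true) →
      T.length = Hs.length → (∀ p ∈ List.zip T Hs, Ipol [] p.1 p.2) →
      IpolRoot T (Hs.foldr .or .fls)
  | rootB {T Hs} : T ≠ [] → (∀ t ∈ T, Tab.side t = false) →
      T.length = Hs.length → (∀ p ∈ List.zip T Hs, Ipol [] p.1 p.2) →
      IpolRoot T (Hs.foldr .and .tru)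

/-- branch_S(N): the conjunction of the literals with side `s` on the branch `br`. -/
def branchFml (s : Bool) (br : List (Lit × Bool)) : Fml :=
  ((br.filter (fun p => p.2 == s)).map (fun p => litFml p.1)).foldr .and .tru

end CTI

namespace CTI

/-- Regularity: no node has an ancestor with the same literal label. -/
def Regular (T : List Tab) : Prop :=
  ∀ br t, OccIn T br t → ∀ s' : Bool, (Tab.lit t, s') ∉ br

/-- Leaf-only for a set `S` of literals: members of `S` do not occur as literal
labels of inner nodes. -/
def LeafOnly (T : List Tab) (S : Set Lit) : Prop :=
  ∀ br t, OccIn T br t → Tab.children t ≠ [] → Tab.lit t ∉ S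

/-- The literals occurring as literal labels in the tableau. -/
def labelsOf (T : List Tab) : Set Lit := {l | ∃ br t, OccIn T br t ∧ Tab.lit t = l}

/-- A positive hyper tableau: regular and leaf-only for the set of all negative
literals occurring as literal labels in it. -/
def PositiveHyper (T : List Tab) : Prop :=
  Regular T ∧ LeafOnly T {l | l.1 = false ∧ l ∈ labelsOf T}

/-- A Horn clause: at most one positive literal. -/
def hornClause (C : Clause) : Prop := C.countP (fun l => l.1 == true) ≤ 1

/-- A Horn clausal formula. -/
def hornCForm (cs : CForm) : Prop := ∀ C ∈ cs, hornClause C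

/-! Blue junctions turn ipol into a conjunction, red ones into a disjunction. A conjunction of
Horn clausal formulas is Horn; a disjunction is equivalent, by distributing it over the
conjunctions, to the clausal formula of all unions of one clause from each disjunct, which is
Horn as long as all disjuncts but one have only negative clauses. At a red junction the
children are labelled by an instance of a Horn clause of `Fr`, so at most one child is
positive, and in a positive hyper tableau the negative children are leaves, whose ipol is `⊥`
or the negative literal itself. -/

theorem EquivF.holds_iff {F G : Fml} (h : EquivF F G) {D : Type} [Nonempty D] (I : Interp D)
    (a : ℕ → D) : F.holds I a ↔ G.holds I a :=
  ⟨h.1 D ‹_› I a, h.2 D ‹_› I a⟩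

theorem equivF_of_holds_iff {F G : Fml}
    (h : ∀ (D : Type) (I : Interp D) (a : ℕ → D), F.holds I a ↔ G.holds I a) : EquivF F G :=
  ⟨fun D _ I a => (h D I a).1, fun D _ I a => (h D I a).2⟩

section Semantics

variable {D : Type} (I : Interp D) (a : ℕ → D)

theorem holds_clauseFml (C : Clause) :
    (clauseFml C).holds I a ↔ ∃ l ∈ C, (litFml l).holds I a := by
  induction C with
  | nil => simp [clauseFml, Fml.holds]
  | cons l C ih => simp [clauseFml, Fml.holds, ← ih]

theorem holds_cformFml (cs : CForm) :
    (cformFml cs).holds I a ↔ ∀ C ∈ cs, (clauseFml C).holds I a := by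
  induction cs with
  | nil => simp [cformFml, Fml.holds]
  | cons C cs ih => simp [cformFml, Fml.holds, ← ih]

theorem holds_cformFml_append (cs₁ cs₂ : CForm) :
    (cformFml (cs₁ ++ cs₂)).holds I a ↔ (cformFml cs₁).holds I a ∧ (cformFml cs₂).holds I a := by
  simp only [holds_cformFml, List.forall_mem_append]

def cformOr (cs₁ cs₂ : CForm) : CForm := cs₁.flatMap fun C₁ => cs₂.map (C₁ ++ ·)

theorem holds_cformFml_cformOr (cs₁ cs₂ : CForm) :
    (cformFml (cformOr cs₁ cs₂)).holds I a ↔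
      (cformFml cs₁).holds I a ∨ (cformFml cs₂).holds I a := by
  simp only [holds_cformFml, cformOr, List.mem_flatMap, List.mem_map]
  constructor
  · intro h
    by_cases h₁ : ∀ C₁ ∈ cs₁, (clauseFml C₁).holds I a
    · exact .inl h₁
    simp only [not_forall] at h₁
    obtain ⟨C₁, hC₁, hfalse⟩ := h₁
    refine .inr fun C₂ hC₂ => ?_
    have := h _ ⟨C₁, hC₁, C₂, hC₂, rfl⟩
    simp only [holds_clauseFml, List.mem_append, or_and_right, exists_or] at this hfalse ⊢
    exact this.resolve_left hfalse
  · rintro h _ ⟨C₁, hC₁, C₂, hC₂, rfl⟩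
    simp only [holds_clauseFml, List.mem_append, or_and_right, exists_or] at h ⊢
    rcases h with h | h
    · exact .inl (h C₁ hC₁)
    · exact .inr (h C₂ hC₂)

end Semantics

def HasCNF (P : Clause → Prop) (H : Fml) : Prop :=
  ∃ cs : CForm, (∀ C ∈ cs, P C) ∧ EquivF H (cformFml cs)

namespace HasCNF

variable {P Q R : Clause → Prop} {H₁ H₂ : Fml}

theorem tru : HasCNF P .tru :=
  ⟨[], by simp, equivF_of_holds_iff fun _ _ _ => by simp [cformFml, Fml.holds]⟩

theorem fls (hP : P []) : HasCNF P .fls :=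
  ⟨[[]], by simpa using hP, equivF_of_holds_iff fun _ _ _ => by
    simp [holds_cformFml, holds_clauseFml, Fml.holds]⟩

theorem litFml {l : Lit} (hP : P [l]) : HasCNF P (litFml l) :=
  ⟨[[l]], by simpa using hP, equivF_of_holds_iff fun _ _ _ => by
    simp only [holds_cformFml, holds_clauseFml, List.mem_singleton, forall_eq, exists_eq_left]⟩

theorem and (h₁ : HasCNF P H₁) (h₂ : HasCNF P H₂) : HasCNF P (.and H₁ H₂) := by
  obtain ⟨cs₁, hP₁, e₁⟩ := h₁
  obtain ⟨cs₂, hP₂, e₂⟩ := h₂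
  refine ⟨cs₁ ++ cs₂, List.forall_mem_append.2 ⟨hP₁, hP₂⟩, equivF_of_holds_iff fun D I a => ?_⟩
  have : Nonempty D := ⟨a 0⟩
  simp only [Fml.holds, holds_cformFml_append, e₁.holds_iff, e₂.holds_iff]

theorem or (h₁ : HasCNF P H₁) (h₂ : HasCNF Q H₂)
    (happend : ∀ C₁ C₂, P C₁ → Q C₂ → R (C₁ ++ C₂)) : HasCNF R (.or H₁ H₂) := by
  obtain ⟨cs₁, hP₁, e₁⟩ := h₁
  obtain ⟨cs₂, hP₂, e₂⟩ := h₂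
  refine ⟨cformOr cs₁ cs₂, ?_, equivF_of_holds_iff fun D I a => ?_⟩
  · simp only [cformOr, List.mem_flatMap, List.mem_map]
    rintro _ ⟨C₁, hC₁, C₂, hC₂, rfl⟩
    exact happend C₁ C₂ (hP₁ C₁ hC₁) (hP₂ C₂ hC₂)
  · have : Nonempty D := ⟨a 0⟩
    simp only [Fml.holds, holds_cformFml_cformOr, e₁.holds_iff, e₂.holds_iff]

theorem foldr_and {Hs : List Fml} (h : ∀ H ∈ Hs, HasCNF P H) :
    HasCNF P (Hs.foldr .and .tru) := by
  induction Hs with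
  | nil => exact tru
  | cons H Hs ih =>
    rw [List.forall_mem_cons] at h
    exact h.1.and (ih h.2)

theorem foldr_or {Hs : List Fml} (hnil : P []) (happend : ∀ C₁ C₂, P C₁ → P C₂ → P (C₁ ++ C₂))
    (h : ∀ H ∈ Hs, HasCNF P H) : HasCNF P (Hs.foldr .or .fls) := by
  induction Hs with
  | nil => exact fls hnil
  | cons H Hs ih =>
    rw [List.forall_mem_cons] at h
    exact h.1.or (ih h.2) happend

end HasCNF

def GroundHornClause (C : Clause) : Prop := clauseGround C ∧ hornClause C

def GroundNegClause (C : Clause) : Prop :=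
  clauseGround C ∧ C.countP (fun l => l.1 == true) = 0

theorem clauseGround_append {C₁ C₂ : Clause} (h₁ : clauseGround C₁) (h₂ : clauseGround C₂) :
    clauseGround (C₁ ++ C₂) :=
  List.forall_mem_append.2 ⟨h₁, h₂⟩

theorem GroundNegClause.append {C₁ C₂ : Clause} (h₁ : GroundNegClause C₁)
    (h₂ : GroundNegClause C₂) : GroundNegClause (C₁ ++ C₂) :=
  ⟨clauseGround_append h₁.1 h₂.1, by rw [List.countP_append, h₁.2, h₂.2]⟩

theorem GroundNegClause.append_groundHornClause {C₁ C₂ : Clause} (h₁ : GroundNegClause C₁)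
    (h₂ : GroundHornClause C₂) : GroundHornClause (C₁ ++ C₂) :=
  ⟨clauseGround_append h₁.1 h₂.1, by
    unfold hornClause; rw [List.countP_append, h₁.2, Nat.zero_add]; exact h₂.2⟩

theorem GroundHornClause.append_groundNegClause {C₁ C₂ : Clause} (h₁ : GroundHornClause C₁)
    (h₂ : GroundNegClause C₂) : GroundHornClause (C₁ ++ C₂) :=
  ⟨clauseGround_append h₁.1 h₂.1, by
    unfold hornClause; rw [List.countP_append, h₂.2, Nat.add_zero]; exact h₁.2⟩

theorem HasCNF.foldr_or_groundHorn {Hs : List Fml}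
    (hHorn : ∀ H ∈ Hs, HasCNF GroundHornClause H)
    (hneg : Hs.Pairwise fun H H' => HasCNF GroundNegClause H ∨ HasCNF GroundNegClause H') :
    HasCNF GroundHornClause (Hs.foldr .or .fls) := by
  induction Hs with
  | nil => exact HasCNF.fls ⟨by simp [clauseGround], by simp [hornClause]⟩
  | cons H Hs ih =>
    rw [List.forall_mem_cons] at hHorn
    rw [List.pairwise_cons] at hneg
    by_cases hH : HasCNF GroundNegClause H
    · exact hH.or (ih hHorn.2 hneg.2) fun _ _ => GroundNegClause.append_groundHornClause
    · have hrest : ∀ H' ∈ Hs, HasCNF GroundNegClause H' :=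
        fun H' hH' => (hneg.1 H' hH').resolve_left hH
      have hnil : GroundNegClause [] := ⟨by simp [clauseGround], by simp⟩
      exact hHorn.1.or (HasCNF.foldr_or hnil (fun _ _ => GroundNegClause.append) hrest)
        fun _ _ => GroundHornClause.append_groundNegClause

theorem _root_.List.pairwise_of_countP_le_one {α : Type*} {p : α → Bool} {l : List α}
    (h : l.countP p ≤ 1) : l.Pairwise fun a b => p a = false ∨ p b = false := by
  induction l with
  | nil => exact .nil
  | cons a l ih =>
    rw [List.countP_cons] at h
    refine List.pairwise_cons.2 ⟨fun b hb => ?_, ih (by split at h <;> omega)⟩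
    cases ha : p a
    · exact .inl rfl
    · rw [ha, if_pos rfl] at h
      exact .inr (by simpa using List.countP_eq_zero.1 (by omega) b hb)

theorem hornClause_of_instClause {C D : Clause} (hinst : instClause C D) (hD : hornClause D) :
    hornClause C := by
  obtain ⟨σ, rfl⟩ := hinst
  unfold hornClause at hD ⊢
  rw [List.countP_map]
  exact hD

theorem hornClause_of_red {Fr Fb : CForm} (hHorn : hornCForm Fr) {cs : List Tab}
    (hcl : cs = [] ∨ ∃ b : Bool, (∀ c ∈ cs, Tab.side c = b) ∧
      ∃ D ∈ (if b then Fr else Fb), instClause (cs.map Tab.lit) D)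
    (hred : ∀ c ∈ cs, Tab.side c = true) : hornClause (cs.map Tab.lit) := by
  rcases cs with _ | ⟨c, cs⟩
  · simp [hornClause]
  obtain _ | ⟨b, hb, D, hD, hinst⟩ := hcl
  · contradiction
  obtain rfl : b = true :=
    (hb c (List.mem_cons_self ..)).symm.trans (hred c (List.mem_cons_self ..))
  exact hornClause_of_instClause hinst (hHorn D hD)

theorem hasCNF_groundHorn_red {cs : List Tab} {Hs : List Fml} (hlen : cs.length = Hs.length)
    (hclause : hornClause (cs.map Tab.lit))
    (hchild : ∀ p ∈ cs.zip Hs, HasCNF GroundHornClause p.2 ∧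
      ((Tab.lit p.1).1 = false → HasCNF GroundNegClause p.2)) :
    HasCNF GroundHornClause (Hs.foldr .or .fls) := by
  have hpos : (cs.zip Hs).Pairwise
      fun p q => (Tab.lit p.1).1 = false ∨ (Tab.lit q.1).1 = false := by
    have := List.pairwise_of_countP_le_one hclause
    rw [← List.map_fst_zip hlen.le, List.map_map, List.pairwise_map] at this
    simpa using this
  rw [← List.map_snd_zip hlen.ge]
  refine HasCNF.foldr_or_groundHorn ?_ ?_
  · simpa using fun H c hp => (hchild (c, H) hp).1
  · rw [List.pairwise_map]
    exact hpos.imp_of_mem fun hp hq h =>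
      h.imp (hchild _ hp).2 (hchild _ hq).2

theorem hasCNF_groundHorn_blue {cs : List Tab} {Hs : List Fml} (hlen : cs.length = Hs.length)
    (hchild : ∀ p ∈ cs.zip Hs, HasCNF GroundHornClause p.2) :
    HasCNF GroundHornClause (Hs.foldr .and .tru) := by
  rw [← List.map_snd_zip hlen.ge]
  exact HasCNF.foldr_and (by simpa using fun H c hp => hchild (c, H) hp)

theorem hasCNF_groundHorn_leafIpol {l : Lit} (hg : litGround l) (s ts : Bool) :
    HasCNF GroundHornClause (leafIpol s ts l) := by
  have hunit : ∀ l' : Lit, litGround l' → GroundHornClause [l'] := fun l' hg' =>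
    ⟨by simpa [clauseGround] using hg', by
      unfold hornClause; rw [List.countP_singleton]; split <;> omega⟩
  cases s <;> cases ts
  · exact HasCNF.tru
  · exact HasCNF.litFml (hunit _ hg)
  · exact HasCNF.litFml (hunit _ hg)
  · exact HasCNF.fls ⟨by simp [clauseGround], by simp [hornClause]⟩

theorem hasCNF_groundNeg_leafIpol {l : Lit} (hg : litGround l) (hneg : l.1 = false) (ts : Bool) :
    HasCNF GroundNegClause (leafIpol true ts l) := by
  cases ts
  · exact HasCNF.litFml ⟨by simpa [clauseGround] using hg, by simp [hneg]⟩
  · exact HasCNF.fls ⟨by simp [clauseGround], by simp⟩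

theorem TwoTableauFor.twoTabFor_of_occIn {Fr Fb : CForm} {T : List Tab}
    (htab : TwoTableauFor Fr Fb T) {br : List (Lit × Bool)} {t : Tab} (hocc : OccIn T br t) :
    TwoTabFor Fr Fb t := by
  induction hocc with
  | top h => exact htab.2 _ h
  | step _ hc ih =>
    obtain ⟨-, hchildren⟩ := ih
    exact hchildren _ hc

theorem LeafOnly.lit_pos {T : List Tab} (hleaf : LeafOnly T {l | l.1 = false ∧ l ∈ labelsOf T})
    {br : List (Lit × Bool)} {t : Tab} (hocc : OccIn T br t) (hinner : Tab.children t ≠ []) :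
    (Tab.lit t).1 = true := by
  by_contra hneg
  exact hleaf br t hocc hinner ⟨by simpa using hneg, br, t, hocc, rfl⟩

section Tableau

variable {Fr Fb : CForm} {T : List Tab} (hHorn : hornCForm Fr) (htab : TwoTableauFor Fr Fb T)
  (hgT : ∀ br t, OccIn T br t → litGround (Tab.lit t))
  (hleaf : LeafOnly T {l | l.1 = false ∧ l ∈ labelsOf T})
include hHorn htab hgT hleaf

theorem Ipol.hasCNF_groundHorn {br : List (Lit × Bool)} {t : Tab} {H : Fml} (hip : Ipol br t H)
    (hocc : OccIn T br t) :
    HasCNF GroundHornClause H ∧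
      (Tab.side t = true → (Tab.lit t).1 = false → HasCNF GroundNegClause H) := by
  induction hip with
  | @leaf br l s ts _ =>
    have hg : litGround l := hgT br _ hocc
    refine ⟨hasCNF_groundHorn_leafIpol hg s ts, fun hs hneg => ?_⟩
    obtain rfl : s = true := hs
    exact hasCNF_groundNeg_leafIpol hg hneg ts
  | innerR hne hsides hlen _ ih =>
    obtain ⟨hcl, -⟩ := htab.twoTabFor_of_occIn hocc
    refine ⟨hasCNF_groundHorn_red hlen (hornClause_of_red hHorn hcl hsides) fun p hp => ?_,
      fun _ hneg => absurd (hleaf.lit_pos hocc hne) (by simp [hneg])⟩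
    have hc := (List.of_mem_zip hp).1
    exact (ih p hp (hocc.step hc)).imp_right fun h => h (hsides _ hc)
  | innerB hne _ hlen _ ih =>
    refine ⟨hasCNF_groundHorn_blue hlen fun p hp => ?_,
      fun _ hneg => absurd (hleaf.lit_pos hocc hne) (by simp [hneg])⟩
    exact (ih p hp (hocc.step (List.of_mem_zip hp).1)).1

theorem IpolRoot.hasCNF_groundHorn {H : Fml} (hip : IpolRoot T H) :
    HasCNF GroundHornClause H := by
  cases hip with
  | rootR _ hsides hlen hzip =>
    refine hasCNF_groundHorn_red hlen (hornClause_of_red hHorn htab.1 hsides) fun p hp => ?_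
    have hc := (List.of_mem_zip hp).1
    exact ((hzip p hp).hasCNF_groundHorn hHorn htab hgT hleaf (.top hc)).imp_right
      fun h => h (hsides _ hc)
  | rootB _ _ hlen hzip =>
    exact hasCNF_groundHorn_blue hlen fun p hp =>
      ((hzip p hp).hasCNF_groundHorn hHorn htab hgT hleaf (.top (List.of_mem_zip hp).1)).1

end Tableau

theorem HasCNF.exists_groundHorn {H : Fml} (h : HasCNF GroundHornClause H) :
    ∃ cs : CForm, cformGround cs ∧ hornCForm cs ∧ EquivF H (cformFml cs) :=
  let ⟨cs, hcs, he⟩ := h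
  ⟨cs, fun C hC => (hcs C hC).1, fun C hC => (hcs C hC).2, he⟩

theorem ipol_horn_general (Fr Fb : CForm) (T : List Tab)
    (hHorn : hornCForm Fr)
    (htab : TwoTableauFor Fr Fb T)
    (hgT : ∀ br t, OccIn T br t → litGround (Tab.lit t))
    (hhyper : PositiveHyper T) :
    (∀ br t, OccIn T br t → ∀ H, Ipol br t H →
        ∃ cs : CForm, cformGround cs ∧ hornCForm cs ∧ EquivF H (cformFml cs))
    ∧ (∀ H, IpolRoot T H →
        ∃ cs : CForm, cformGround cs ∧ hornCForm cs ∧ EquivF H (cformFml cs)) :=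
  ⟨fun _ _ hocc _ hip => (hip.hasCNF_groundHorn hHorn htab hgT hhyper.2 hocc).1.exists_groundHorn,
    fun _ hip => (hip.hasCNF_groundHorn hHorn htab hgT hhyper.2).exists_groundHorn⟩

/-- For a closed two-sided clausal ground tableau for `Fr` and `Fb`
that is a positive hyper tableau, where `Fr` is Horn, the ipol value of every
node (in particular of the root) is equivalent to a ground Horn clausal formula. -/
theorem ipol_horn (Fr Fb : CForm) (T : List Tab)
    (hgFr : cformGround Fr) (hgFb : cformGround Fb)
    (hHorn : hornCForm Fr)
    (htab : TwoTableauFor Fr Fb T)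
    (hgT : ∀ br t, OccIn T br t → litGround (Tab.lit t))
    (hclosed : ∀ t ∈ T, SClosedFrom [] t)
    (hhyper : PositiveHyper T) :
    (∀ br t, OccIn T br t → ∀ H, Ipol br t H →
        ∃ cs : CForm, cformGround cs ∧ hornCForm cs ∧ EquivF H (cformFml cs))
    ∧ (∀ H, IpolRoot T H →
        ∃ cs : CForm, cformGround cs ∧ hornCForm cs ∧ EquivF H (cformFml cs)) :=
  ipol_horn_general Fr Fb T hHorn htab hgT hhyper

end CTI
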